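/- arXiv:1603.09173 — 2 statements merged into one kernel-verified Lean document; each statement's English description precedes it below -/
import Mathlib

section
/- Let A be a finite nonempty set, X the simplex in ℝ^A, v : X → ℝ^A, and x* ∈ X. Let G be a symmetric positive-definite matrix, set w = G⁻¹ v(x*), and let V be the G-projection of w onto the tangent cone TC_X(x*). Then V = 0 if and only if x* is a Nash equilibrium of v, i.e., if and only if v(x*)·(x − x*) ≤ 0 for all x ∈ X. -/
/-!
The tangent cone `TC_X(x*)` is the cone spanned by `X - x*`, so `x*` is a Nash equilibrium iff
`v(x*) · z ≤ 0` on `TC_X(x*)`. Since `⟨G⁻¹ v, z⟩_G = v · z`, this says that `w` is `G`-polar to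
the cone, and the `G`-projection onto a cone vanishes exactly at polar vectors: if it vanishes,
comparing with the points `t z`, `t ↓ 0`, gives `⟨w, z⟩_G ≤ 0`; conversely, comparing `V` with `0`
gives `‖V‖_G² ≤ 2 ⟨w, V⟩_G ≤ 0`.
-/

open Matrix

noncomputable section

/-- The tangent cone `TC_X(x)` of the simplex at `x`. -/
def tcone {A : Type*} [Fintype A] (x : A → ℝ) : Set (A → ℝ) :=
  {z | (∑ α, z α) = 0 ∧ ∀ α, x α = 0 → 0 ≤ z α}

/-- The quadratic form `wᵀ G w = ‖w‖_G²` associated to a matrix `G`. -/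
def qform {A : Type*} [Fintype A] (G : Matrix A A ℝ) (w : A → ℝ) : ℝ :=
  w ⬝ᵥ G.mulVec w

/-- `V` is the `G`-projection of `w` onto `C`. -/
def IsGProj {A : Type*} [Fintype A] (G : Matrix A A ℝ) (C : Set (A → ℝ))
    (w V : A → ℝ) : Prop :=
  V ∈ C ∧ ∀ z ∈ C, qform G (w - V) ≤ qform G (w - z)

open Filter Topology

lemma Matrix.PosDef.isSymm {A : Type*} {G : Matrix A A ℝ} (hG : G.PosDef) : G.IsSymm :=
  isHermitian_iff_isSymm.1 hG.isHermitian

section GProjection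

variable {A : Type*} [Fintype A] {G : Matrix A A ℝ}

lemma dotProduct_mulVec_comm_of_isSymm (hG : G.IsSymm) (a b : A → ℝ) :
    a ⬝ᵥ G *ᵥ b = b ⬝ᵥ G *ᵥ a := by
  simpa [hG.eq] using (dotProduct_transpose_mulVec G b a).symm

lemma inv_mulVec_dotProduct_mulVec [DecidableEq A] (hG : G.IsSymm) (hdet : IsUnit G.det)
    (v z : A → ℝ) : G⁻¹ *ᵥ v ⬝ᵥ G *ᵥ z = v ⬝ᵥ z := by
  rw [dotProduct_mulVec_comm_of_isSymm hG, mulVec_mulVec, mul_nonsing_inv _ hdet, one_mulVec,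
    dotProduct_comm]

lemma qform_sub (hG : G.IsSymm) (a b : A → ℝ) :
    qform G (a - b) = qform G a - 2 * (a ⬝ᵥ G *ᵥ b) + qform G b := by
  simp only [qform, mulVec_sub, dotProduct_sub, sub_dotProduct]
  rw [dotProduct_mulVec_comm_of_isSymm hG b a]
  ring

lemma qform_smul (t : ℝ) (z : A → ℝ) : qform G (t • z) = t ^ 2 * qform G z := by
  simp only [qform, mulVec_smul, dotProduct_smul, smul_dotProduct, smul_eq_mul]
  ring

lemma qform_pos (hG : G.PosDef) {z : A → ℝ} (hz : z ≠ 0) : 0 < qform G z := by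
  simpa [qform] using hG.dotProduct_mulVec_pos hz

variable {C : Set (A → ℝ)} {w V : A → ℝ}

lemma IsGProj.dotProduct_mulVec_nonpos_of_eq_zero (hG : G.IsSymm)
    (hC : ∀ z ∈ C, ∀ t : ℝ, 0 ≤ t → t • z ∈ C) (h : IsGProj G C w 0) :
    ∀ z ∈ C, w ⬝ᵥ G *ᵥ z ≤ 0 := by
  intro z hz
  have hsmall : ∀ t : ℝ, 0 < t → 2 * (w ⬝ᵥ G *ᵥ z) ≤ t * qform G z := by
    intro t ht
    have := h.2 (t • z) (hC z hz t ht.le)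
    rw [sub_zero, qform_sub hG, qform_smul, mulVec_smul, dotProduct_smul, smul_eq_mul] at this
    nlinarith
  have hlim : Tendsto (fun t : ℝ => t * qform G z) (𝓝[>] 0) (𝓝 0) := by
    refine tendsto_nhdsWithin_of_tendsto_nhds ?_
    simpa using (by fun_prop : Continuous fun t : ℝ => t * qform G z).tendsto 0
  have := ge_of_tendsto hlim (eventually_nhdsWithin_of_forall hsmall)
  linarith

lemma IsGProj.eq_zero_of_dotProduct_mulVec_nonpos (hG : G.PosDef) (hC : (0 : A → ℝ) ∈ C)
    (h : IsGProj G C w V) (hwV : w ⬝ᵥ G *ᵥ V ≤ 0) : V = 0 := by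
  have := h.2 0 hC
  rw [sub_zero, qform_sub hG.isSymm] at this
  by_contra hV
  linarith [qform_pos hG hV]

theorem IsGProj.eq_zero_iff (hG : G.PosDef) (hC : ∀ z ∈ C, ∀ t : ℝ, 0 ≤ t → t • z ∈ C)
    (h : IsGProj G C w V) : V = 0 ↔ ∀ z ∈ C, w ⬝ᵥ G *ᵥ z ≤ 0 := by
  refine ⟨?_, fun hpolar => h.eq_zero_of_dotProduct_mulVec_nonpos hG ?_ (hpolar V h.1)⟩
  · rintro rfl
    exact h.dotProduct_mulVec_nonpos_of_eq_zero hG.isSymm hC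
  · simpa using hC V h.1 0 le_rfl

end GProjection

section TangentCone

variable {A : Type*} [Fintype A]

lemma smul_mem_tcone {x z : A → ℝ} (hz : z ∈ tcone x) {t : ℝ} (ht : 0 ≤ t) :
    t • z ∈ tcone x :=
  ⟨by simp [← Finset.mul_sum, hz.1], fun α hα => mul_nonneg ht (hz.2 α hα)⟩

lemma sub_mem_tcone {x y : A → ℝ} (hx : x ∈ stdSimplex ℝ A) (hy : y ∈ stdSimplex ℝ A) :
    x - y ∈ tcone y := by
  refine ⟨by simp [Finset.sum_sub_distrib, hx.2, hy.2], fun α hα => ?_⟩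
  simpa [hα] using hx.1 α

lemma exists_pos_add_smul_mem_stdSimplex {x z : A → ℝ} (hx : x ∈ stdSimplex ℝ A)
    (hz : z ∈ tcone x) : ∃ t : ℝ, 0 < t ∧ x + t • z ∈ stdSimplex ℝ A := by
  have hcoord : ∀ α, ∀ᶠ t in 𝓝[>] (0 : ℝ), 0 ≤ x α + t * z α := by
    intro α
    rcases (hx.1 α).eq_or_lt with hzero | hpos
    · filter_upwards [self_mem_nhdsWithin] with t ht
      rw [← hzero, zero_add]
      exact mul_nonneg (le_of_lt ht) (hz.2 α hzero.symm)
    · have hlim : Tendsto (fun t : ℝ => x α + t * z α) (𝓝[>] 0) (𝓝 (x α)) := by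
        refine tendsto_nhdsWithin_of_tendsto_nhds ?_
        simpa using (by fun_prop : Continuous fun t : ℝ => x α + t * z α).tendsto 0
      exact (hlim.eventually (lt_mem_nhds hpos)).mono fun _ => le_of_lt
  obtain ⟨t, hnonneg, ht⟩ := ((eventually_all.2 hcoord).and self_mem_nhdsWithin).exists
  refine ⟨t, ht, hnonneg, ?_⟩
  simp [Finset.sum_add_distrib, ← Finset.mul_sum, hx.2, hz.1]

lemma forall_stdSimplex_dotProduct_sub_nonpos_iff {x : A → ℝ} (hx : x ∈ stdSimplex ℝ A)
    (p : A → ℝ) :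
    (∀ y ∈ stdSimplex ℝ A, p ⬝ᵥ (y - x) ≤ 0) ↔ ∀ z ∈ tcone x, p ⬝ᵥ z ≤ 0 := by
  refine ⟨fun h z hz => ?_, fun h y hy => h _ (sub_mem_tcone hy hx)⟩
  obtain ⟨t, ht, hmem⟩ := exists_pos_add_smul_mem_stdSimplex hx hz
  have := h _ hmem
  rw [add_sub_cancel_left, dotProduct_smul, smul_eq_mul] at this
  exact nonpos_of_mul_nonpos_right this ht

end TangentCone

theorem stmt_4_general {A : Type*} [Fintype A] [DecidableEq A]
    (v : (A → ℝ) → (A → ℝ)) (xstar : A → ℝ) (hxstar : xstar ∈ stdSimplex ℝ A)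
    (G : Matrix A A ℝ) (hG : G.PosDef)
    (V : A → ℝ) (hV : IsGProj G (tcone xstar) (G⁻¹.mulVec (v xstar)) V) :
    V = 0 ↔ ∀ x ∈ stdSimplex ℝ A, v xstar ⬝ᵥ (x - xstar) ≤ 0 := by
  have hdot := inv_mulVec_dotProduct_mulVec hG.isSymm
    (isUnit_iff_ne_zero.2 hG.det_pos.ne') (v xstar)
  rw [hV.eq_zero_iff hG fun _ hz _ ht => smul_mem_tcone hz ht,
    forall_stdSimplex_dotProduct_sub_nonpos_iff hxstar]
  simp only [hdot]

/-- Nash stationarity for discontinuous Riemannian dynamics.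
With `w = G⁻¹ v(x*)` and `V` the `G`-projection of `w` onto `TC_X(x*)`, one has `V = 0`
iff `x*` is a Nash equilibrium of `v`. -/
theorem stmt_4 {A : Type*} [Fintype A] [DecidableEq A] [Nonempty A]
    (v : (A → ℝ) → (A → ℝ)) (xstar : A → ℝ) (hxstar : xstar ∈ stdSimplex ℝ A)
    (G : Matrix A A ℝ) (hG : G.PosDef)
    (V : A → ℝ) (hV : IsGProj G (tcone xstar) (G⁻¹.mulVec (v xstar)) V) :
    V = 0 ↔ ∀ x ∈ stdSimplex ℝ A, v xstar ⬝ᵥ (x - xstar) ≤ 0 :=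
  stmt_4_general v xstar hxstar G hG V hV
end
end

section
/- Let A be a finite nonempty set, X the simplex in ℝ^A with interior X° (points with all coordinates positive), v : X → ℝ^A, and x* ∈ X a GESS of v. Let h be twice continuously differentiable on an open set containing X, with Hessian H(y) positive definite at each y ∈ X°. Let x : I → X° be differentiable with x'(t) = V(x(t)), where V(y) is the H(y)-projection of H(y)⁻¹ v(y) onto ℝ₀^A = {z ∈ ℝ^A : ∑_α z_α = 0}. Then for each t, (d/dt) D_h(x*, x(t)) = v(x(t))·(x(t) − x*) ≤ 0, with equality if and only if x(t) = x*. -/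
open Matrix

noncomputable section

/-- The relative interior of the simplex (all coordinates positive, summing to one). -/
def intSimplex (A : Type*) [Fintype A] : Set (A → ℝ) :=
  {x | (∀ α, 0 < x α) ∧ (∑ α, x α) = 1}

/-- The Hessian matrix of `h` at `y`. -/
def hessMat {A : Type*} [Fintype A] [DecidableEq A] (h : (A → ℝ) → ℝ) (y : A → ℝ) :
    Matrix A A ℝ :=
  Matrix.of fun α β => fderiv ℝ (fderiv ℝ h) y (Pi.single α 1) (Pi.single β 1)

/-!
Along the curve, the first-order terms in the derivative of `D_h(x*, x(t))` cancel and only the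
Hessian term `∇²h(x)(ẋ, x − x*)` survives. Since `x − x*` lies in `ℝ₀^A` and `ẋ = V(x)` is the
`H(x)`-projection of `H(x)⁻¹ v(x)` onto `ℝ₀^A`, the residual `H(x)⁻¹ v(x) − V(x)` is
`H(x)`-orthogonal to `x − x*`, so that term equals `⟨H(x)⁻¹ v(x), x − x*⟩_{H(x)} = v(x)·(x − x*)`.
The GESS condition gives the sign and the equality case.
-/

theorem ContinuousLinearMap.apply_apply_eq_dotProduct_mulVec {𝕜 A : Type*}
    [NontriviallyNormedField 𝕜] [Fintype A] [DecidableEq A]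
    (B : (A → 𝕜) →L[𝕜] (A → 𝕜) →L[𝕜] 𝕜) (u w : A → 𝕜) :
    B u w = u ⬝ᵥ (Matrix.of fun α β => B (Pi.single α 1) (Pi.single β 1)) *ᵥ w := by
  change B.toLinearMap₁₂ u w = _
  rw [← Matrix.toLinearMap₂'_toMatrix' (R := 𝕜) B.toLinearMap₁₂, Matrix.toLinearMap₂'_apply']
  rfl

theorem fderiv_fderiv_apply_eq_dotProduct_hessMat {A : Type*} [Fintype A] [DecidableEq A]
    (h : (A → ℝ) → ℝ) (y u w : A → ℝ) :
    fderiv ℝ (fderiv ℝ h) y u w = u ⬝ᵥ hessMat h y *ᵥ w :=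
  (fderiv ℝ (fderiv ℝ h) y).apply_apply_eq_dotProduct_mulVec u w

theorem Matrix.IsHermitian.dotProduct_mulVec_comm {A R : Type*} [Fintype A] [CommSemiring R]
    [StarRing R] [TrivialStar R] {G : Matrix A A R} (hG : G.IsHermitian) (a b : A → R) :
    a ⬝ᵥ G *ᵥ b = b ⬝ᵥ G *ᵥ a := by
  rw [dotProduct_mulVec, dotProduct_comm, ← vecMul_transpose,
    ← conjTranspose_eq_transpose_of_trivial, hG.eq]

section Projection

variable {A : Type*} [Fintype A] {G : Matrix A A ℝ} {K : Submodule ℝ (A → ℝ)} {w V : A → ℝ}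

theorem qform_sub_smul (hG : G.IsHermitian) (u z : A → ℝ) (t : ℝ) :
    qform G (u - t • z) = qform G z * (t * t) + -2 * (u ⬝ᵥ G *ᵥ z) * t + qform G u := by
  simp only [qform, mulVec_sub, mulVec_smul, sub_dotProduct, dotProduct_sub, smul_dotProduct,
    dotProduct_smul, smul_eq_mul, hG.dotProduct_mulVec_comm z u]
  ring

-- `t ↦ ‖w - V - t z‖²_G` is minimal at `t = 0`, so its discriminant is nonpositive.
theorem IsGProj.sub_dotProduct_mulVec_eq_zero (hG : G.PosSemidef) (hp : IsGProj G K w V)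
    {z : A → ℝ} (hz : z ∈ K) : (w - V) ⬝ᵥ G *ᵥ z = 0 := by
  have hmin : ∀ t : ℝ, 0 ≤ qform G z * (t * t) + -2 * ((w - V) ⬝ᵥ G *ᵥ z) * t + 0 := by
    intro t
    have := hp.2 (V + t • z) (K.add_mem hp.1 (K.smul_mem t hz))
    rw [show w - (V + t • z) = (w - V) - t • z by abel, qform_sub_smul hG.isHermitian] at this
    linarith
  have := discrim_le_zero hmin
  simp only [discrim] at this
  nlinarith [sq_nonneg ((w - V) ⬝ᵥ G *ᵥ z)]

theorem IsGProj.dotProduct_mulVec_eq [DecidableEq A] {g : A → ℝ} (hG : G.PosDef)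
    (hp : IsGProj G K (G⁻¹ *ᵥ g) V) {z : A → ℝ} (hz : z ∈ K) : V ⬝ᵥ G *ᵥ z = g ⬝ᵥ z := by
  have horth := hp.sub_dotProduct_mulVec_eq_zero hG.posSemidef hz
  rw [sub_dotProduct, sub_eq_zero, hG.isHermitian.dotProduct_mulVec_comm, mulVec_mulVec,
    mul_nonsing_inv _ hG.det_pos.ne'.isUnit, one_mulVec, dotProduct_comm] at horth
  exact horth.symm

end Projection

section Bregman

variable {E : Type*} [NormedAddCommGroup E] [NormedSpace ℝ E]

def bregmanDiv (h : E → ℝ) (p y : E) : ℝ :=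
  h p - h y - fderiv ℝ h y (p - y)

theorem ContDiffAt.hasDerivAt_bregmanDiv_comp {h : E → ℝ} {x : ℝ → E} {x' : E} {t : ℝ}
    (hh : ContDiffAt ℝ 2 h (x t)) (hx : HasDerivAt x x' t) (p : E) :
    HasDerivAt (fun s => bregmanDiv h p (x s)) (fderiv ℝ (fderiv ℝ h) (x t) x' (x t - p)) t := by
  have hDh : HasFDerivAt h (fderiv ℝ h (x t)) (x t) :=
    (hh.differentiableAt two_ne_zero).hasFDerivAt
  have hD2h : HasFDerivAt (fderiv ℝ h) (fderiv ℝ (fderiv ℝ h) (x t)) (x t) :=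
    ((hh.fderiv_right one_add_one_eq_two.le).differentiableAt one_ne_zero).hasFDerivAt
  have hlin := (hD2h.comp_hasDerivAt t hx).clm_apply (hx.const_sub p)
  refine (((hDh.comp_hasDerivAt t hx).const_sub (h p)).sub hlin).congr_deriv ?_
  simp only [Function.comp_apply, ← neg_sub (x t) p, map_neg]
  ring

end Bregman

def sumZeroSubmodule (A : Type*) [Fintype A] : Submodule ℝ (A → ℝ) where
  carrier := {z | ∑ α, z α = 0}
  add_mem' {a b} ha hb := by simp_all [Finset.sum_add_distrib]
  zero_mem' := by simp
  smul_mem' c z hz := by simp_all [← Finset.mul_sum]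

theorem stmt_8_general {A : Type*} [Fintype A] [DecidableEq A]
    (v : (A → ℝ) → (A → ℝ)) (xstar : A → ℝ) (hxstarX : xstar ∈ stdSimplex ℝ A)
    (hGESS : ∀ y ∈ stdSimplex ℝ A,
      v y ⬝ᵥ (y - xstar) ≤ 0 ∧ (v y ⬝ᵥ (y - xstar) = 0 → y = xstar))
    (h : (A → ℝ) → ℝ) (U : Set (A → ℝ)) (hU : IsOpen U) (hXU : stdSimplex ℝ A ⊆ U)
    (hh : ContDiffOn ℝ 2 h U)
    (hpd : ∀ y ∈ intSimplex A, (hessMat h y).PosDef)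
    (V : (A → ℝ) → (A → ℝ))
    (hV : ∀ y ∈ intSimplex A,
      IsGProj (hessMat h y) {z : A → ℝ | (∑ α, z α) = 0}
        ((hessMat h y)⁻¹.mulVec (v y)) (V y))
    (x : ℝ → (A → ℝ)) (hxint : ∀ t : ℝ, x t ∈ intSimplex A)
    (hx' : ∀ t : ℝ, HasDerivAt x (V (x t)) t) :
    ∀ t : ℝ,
      HasDerivAt (fun s => h xstar - h (x s) - fderiv ℝ h (x s) (xstar - x s))
        (v (x t) ⬝ᵥ (x t - xstar)) t ∧
      v (x t) ⬝ᵥ (x t - xstar) ≤ 0 ∧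
      (v (x t) ⬝ᵥ (x t - xstar) = 0 ↔ x t = xstar) := by
  intro t
  have hy : x t ∈ intSimplex A := hxint t
  have hyX : x t ∈ stdSimplex ℝ A := ⟨fun α => (hy.1 α).le, hy.2⟩
  have htangent : x t - xstar ∈ sumZeroSubmodule A := by
    simp [sumZeroSubmodule, Finset.sum_sub_distrib, hy.2, hxstarX.2]
  have hHess :
      fderiv ℝ (fderiv ℝ h) (x t) (V (x t)) (x t - xstar) = v (x t) ⬝ᵥ (x t - xstar) := by
    rw [fderiv_fderiv_apply_eq_dotProduct_hessMat]
    exact IsGProj.dotProduct_mulVec_eq (K := sumZeroSubmodule A) (hpd _ hy) (hV _ hy) htangent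
  refine ⟨?_, (hGESS _ hyX).1, (hGESS _ hyX).2, fun he => by simp [he]⟩
  rw [← hHess]
  exact (hh.contDiffAt (hU.mem_nhds (hXU hyX))).hasDerivAt_bregmanDiv_comp (hx' t) xstar

/-- the key Lyapunov computation for Hessian dynamics at a GESS.  Along an
interior solution `x'(t) = V(x(t))` of the Hessian dynamics (the `H(y)`-projection of
`H(y)⁻¹ v(y)` onto `ℝ₀^A`), the Bregman divergence `D_h(x*, x(t))` has time derivative
`v(x(t))·(x(t) − x*) ≤ 0`, with equality iff `x(t) = x*`. -/
theorem stmt_8 {A : Type*} [Fintype A] [DecidableEq A] [Nonempty A]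
    (v : (A → ℝ) → (A → ℝ)) (xstar : A → ℝ) (hxstarX : xstar ∈ stdSimplex ℝ A)
    (hGESS : ∀ y ∈ stdSimplex ℝ A,
      v y ⬝ᵥ (y - xstar) ≤ 0 ∧ (v y ⬝ᵥ (y - xstar) = 0 → y = xstar))
    (h : (A → ℝ) → ℝ) (U : Set (A → ℝ)) (hU : IsOpen U) (hXU : stdSimplex ℝ A ⊆ U)
    (hh : ContDiffOn ℝ 2 h U)
    (hpd : ∀ y ∈ intSimplex A, (hessMat h y).PosDef)
    (V : (A → ℝ) → (A → ℝ))
    (hV : ∀ y ∈ intSimplex A,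
      IsGProj (hessMat h y) {z : A → ℝ | (∑ α, z α) = 0}
        ((hessMat h y)⁻¹.mulVec (v y)) (V y))
    (x : ℝ → (A → ℝ)) (hxint : ∀ t : ℝ, x t ∈ intSimplex A)
    (hx' : ∀ t : ℝ, HasDerivAt x (V (x t)) t) :
    ∀ t : ℝ,
      HasDerivAt (fun s => h xstar - h (x s) - fderiv ℝ h (x s) (xstar - x s))
        (v (x t) ⬝ᵥ (x t - xstar)) t ∧
      v (x t) ⬝ᵥ (x t - xstar) ≤ 0 ∧
      (v (x t) ⬝ᵥ (x t - xstar) = 0 ↔ x t = xstar) :=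
  stmt_8_general v xstar hxstarX hGESS h U hU hXU hh hpd V hV x hxint hx'
end
end
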